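/- arXiv:1802.08992 — 3 statements merged into one kernel-verified Lean document; each statement's English description precedes it below -/
import Mathlib

section
/- Let H be a real Hilbert space with inner product ⟨·,·⟩₀ and norm ‖·‖₀, let V ⊆ H be a subspace, let N_s, N_t be extended seminorms on H, and let δ_s, δ_t > 0 be such that N_s(g) ≤ ‖g‖₀/δ_s and N_t(g) ≤ ‖g‖₀/δ_t for all g ∈ V. Then for every g ∈ V: N_s(g) ≤ ‖g‖_{N_t*} / (δ_s δ_t), where ‖h‖_{N_t*} := sup{⟨h,u⟩₀ : u ∈ H, N_t(u) ≤ 1} is the dual norm of N_t. -/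
open scoped ENNReal RealInnerProductSpace

/-!
Testing the dual norm of `g` against `(δ_t / ‖g‖) • g`, which has `N_t ≤ 1` by the Bernstein
inequality for `N_t`, gives `‖g‖_{N_t*} ≥ δ_t ‖g‖`; dividing by `δ_s δ_t` and combining with
`N_s(g) ≤ ‖g‖ / δ_s` gives the estimate.
-/

noncomputable section

/-- An extended seminorm on a real inner product space: a `[0,∞]`-valued function vanishing
at `0`, absolutely homogeneous and subadditive. -/
def IsExtSeminorm {H : Type*} [NormedAddCommGroup H] [InnerProductSpace ℝ H]
    (N : H → ℝ≥0∞) : Prop :=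
  N 0 = 0 ∧ (∀ (c : ℝ) (f : H), N (c • f) = ENNReal.ofReal |c| * N f) ∧
    (∀ f g : H, N (f + g) ≤ N f + N g)

/-- The dual norm of an extended seminorm `N`:  `‖f‖_{N*} = sup {⟪f,g⟫ : N g ≤ 1}`. -/
def dualNorm {H : Type*} [NormedAddCommGroup H] [InnerProductSpace ℝ H]
    (N : H → ℝ≥0∞) (f : H) : ℝ≥0∞ :=
  ⨆ g : {g : H // N g ≤ 1}, ENNReal.ofReal ⟪f, (g : H)⟫

section DualNorm

variable {H : Type*} [NormedAddCommGroup H] [InnerProductSpace ℝ H] {N : H → ℝ≥0∞}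

theorem ofReal_inner_le_dualNorm (f : H) {u : H} (hu : N u ≤ 1) :
    ENNReal.ofReal ⟪f, u⟫ ≤ dualNorm N f :=
  le_iSup (fun v : {v : H // N v ≤ 1} => ENNReal.ofReal ⟪f, (v : H)⟫) ⟨u, hu⟩

theorem ofReal_inner_div_le_dualNorm
    (hN : ∀ (c : ℝ) (f : H), N (c • f) = ENNReal.ofReal |c| * N f)
    (f : H) {g : H} {c : ℝ} (hc : 0 < c) (hg : N g ≤ ENNReal.ofReal c) :
    ENNReal.ofReal (⟪f, g⟫ / c) ≤ dualNorm N f := by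
  have hunit : N (c⁻¹ • g) ≤ 1 :=
    calc N (c⁻¹ • g) = ENNReal.ofReal c⁻¹ * N g := by
          rw [hN, abs_of_pos (inv_pos.mpr hc)]
      _ ≤ ENNReal.ofReal c⁻¹ * ENNReal.ofReal c := by gcongr
      _ = 1 := by
          rw [← ENNReal.ofReal_mul (inv_nonneg.mpr hc.le), inv_mul_cancel₀ hc.ne',
            ENNReal.ofReal_one]
  simpa [real_inner_smul_right, div_eq_inv_mul] using ofReal_inner_le_dualNorm f hunit

theorem ofReal_mul_norm_le_dualNorm
    (hN : ∀ (c : ℝ) (f : H), N (c • f) = ENNReal.ofReal |c| * N f)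
    {δ : ℝ} (hδ : 0 < δ) {g : H} (hg : N g ≤ ENNReal.ofReal (‖g‖ / δ)) :
    ENNReal.ofReal (δ * ‖g‖) ≤ dualNorm N g := by
  rcases eq_or_ne g 0 with rfl | hg0
  · simp
  have hnorm : 0 < ‖g‖ := norm_pos_iff.mpr hg0
  convert ofReal_inner_div_le_dualNorm hN g (div_pos hnorm hδ) hg using 2
  rw [real_inner_self_eq_norm_sq]
  field_simp

end DualNorm

theorem bernstein_dual_norm_estimate_general
    {H : Type*} [NormedAddCommGroup H] [InnerProductSpace ℝ H]
    (V : Submodule ℝ H)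
    (Ns Nt : H → ℝ≥0∞) (hNt : IsExtSeminorm Nt)
    (δs δt : ℝ) (hδs : 0 < δs) (hδt : 0 < δt)
    (hBs : ∀ g ∈ V, Ns g ≤ ENNReal.ofReal (‖g‖ / δs))
    (hBt : ∀ g ∈ V, Nt g ≤ ENNReal.ofReal (‖g‖ / δt)) :
    ∀ g ∈ V, Ns g ≤ dualNorm Nt g / ENNReal.ofReal (δs * δt) := by
  intro g hg
  calc Ns g ≤ ENNReal.ofReal (‖g‖ / δs) := hBs g hg
    _ = ENNReal.ofReal (δt * ‖g‖) / ENNReal.ofReal (δs * δt) := by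
        rw [← ENNReal.ofReal_div_of_pos (by positivity)]
        congr 1
        field_simp
    _ ≤ dualNorm Nt g / ENNReal.ofReal (δs * δt) := by
        gcongr
        exact ofReal_mul_norm_le_dualNorm hNt.2.1 hδt (hBt g hg)

/-- **Inverse (Bernstein-type) estimate in the dual norm** (Lemma A.1, second inequality):
if the Bernstein inequalities `N_s(g) ≤ ‖g‖₀/δ_s` and `N_t(g) ≤ ‖g‖₀/δ_t` hold on a subspace
`V`, then `N_s(g) ≤ ‖g‖_{N_t*}/(δ_s δ_t)` for all `g ∈ V`. -/
theorem bernstein_dual_norm_estimate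
    {H : Type*} [NormedAddCommGroup H] [InnerProductSpace ℝ H]
    (V : Submodule ℝ H)
    (Ns Nt : H → ℝ≥0∞) (hNs : IsExtSeminorm Ns) (hNt : IsExtSeminorm Nt)
    (δs δt : ℝ) (hδs : 0 < δs) (hδt : 0 < δt)
    (hBs : ∀ g ∈ V, Ns g ≤ ENNReal.ofReal (‖g‖ / δs))
    (hBt : ∀ g ∈ V, Nt g ≤ ENNReal.ofReal (‖g‖ / δt)) :
    ∀ g ∈ V, Ns g ≤ dualNorm Nt g / ENNReal.ofReal (δs * δt) :=
  bernstein_dual_norm_estimate_general V Ns Nt hNt δs δt hδs hδt hBs hBt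

end
end

section
/- Let H and G be real Hilbert spaces, N_γ an extended seminorm on H with dual norm ‖·‖₋γ, V ⊆ H a finite-dimensional subspace with orthogonal projection P, δ > 0, and C₀ ≥ 1 a constant such that: ‖f − Pf‖₀ ≤ C₀ δ N_γ(f) for all f ∈ H (Jackson inequality) and N_γ(g) ≤ C₀ ‖g‖₀/δ for all g ∈ V (Bernstein inequality). Let A : H → G be an injective bounded linear operator with c‖f‖₋γ ≤ ‖Af‖_G ≤ C‖f‖₋γ for all f ∈ H (0 < c ≤ C), let Q be the orthogonal projection of G onto A(V), and R := (A|_V)⁻¹ ∘ Q : G → V. Then there exists a constant K depending only on c, C, C₀ such that: (i) ‖Rg‖₀ ≤ K ‖g‖_G / δ for all g ∈ G; (ii) ‖R(Af)‖₀ ≤ K ‖f‖₀ for all f ∈ H; (iii) for every function N_s : H → [0,∞] and δ_s ≥ 0 with ‖f − Pf‖₀ ≤ δ_s N_s(f) for all f ∈ H, the Galerkin solution f^{(V)} := R(Af) satisfies ‖f^{(V)} − f‖₀ ≤ K δ_s N_s(f) for all f ∈ H. -/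
/-!
Testing `h ∈ V` against a multiple of itself, Bernstein's inequality gives
`‖h‖₋γ ≥ δ ‖h‖₀ / C₀`, so the lower bound on `A` makes `A` stable on `V`:
`‖h‖₀ ≤ C₀ / (c δ) ‖A h‖`. Since the residual `f - P f` is orthogonal to `V`, Jackson's
inequality gives `‖f - P f‖₋γ ≤ C₀ δ ‖f - P f‖₀`, hence `‖A (f - P f)‖ ≤ C C₀ δ ‖f - P f‖₀`.
Galerkin orthogonality makes `A (R (A f) - P f)` the orthogonal projection of `A (f - P f)`
onto `A(V)`, and a Céa-type argument yields `‖R (A f) - f‖₀ ≤ (1 + C C₀² / c) ‖f - P f‖₀`,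
from which (ii) and (iii) follow; (i) is stability on `V` together with `‖Q‖ ≤ 1`.
-/

open scoped ENNReal RealInnerProductSpace

noncomputable section

section Orthogonality

variable {E : Type*} [NormedAddCommGroup E] [InnerProductSpace ℝ E]

theorem norm_left_le_norm_add_of_inner_eq_zero {x y : E} (h : ⟪x, y⟫ = 0) :
    ‖x‖ ≤ ‖x + y‖ := by
  refine (pow_le_pow_iff_left₀ (norm_nonneg _) (norm_nonneg _) two_ne_zero).1 ?_
  rw [norm_add_sq_real, h, mul_zero, add_zero]
  exact le_add_of_nonneg_right (sq_nonneg _)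

theorem norm_right_le_norm_add_of_inner_eq_zero {x y : E} (h : ⟪x, y⟫ = 0) :
    ‖y‖ ≤ ‖x + y‖ := by
  rw [add_comm]
  exact norm_left_le_norm_add_of_inner_eq_zero (by rwa [real_inner_comm])

end Orthogonality

section DualNorm

variable {H : Type*} [NormedAddCommGroup H] [InnerProductSpace ℝ H] {N : H → ℝ≥0∞}

theorem ofReal_norm_div_le_dualNorm
    (hN : ∀ (a : ℝ) (f : H), N (a • f) = ENNReal.ofReal |a| * N f) {B : ℝ} {f : H}
    (hf : N f ≤ ENNReal.ofReal (B * ‖f‖)) :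
    ENNReal.ofReal (‖f‖ / B) ≤ dualNorm N f := by
  rcases le_or_gt (‖f‖ / B) 0 with hle | hpos
  · simp [ENNReal.ofReal_eq_zero.2 hle]
  obtain ⟨hf0, hB⟩ : 0 < ‖f‖ ∧ 0 < B := by
    rcases div_pos_iff.1 hpos with h | h
    · exact h
    · exact absurd h.1 (norm_nonneg f).not_gt
  set t := (B * ‖f‖)⁻¹ with ht_def
  have ht : 0 < t := by positivity
  have hNt : N (t • f) ≤ 1 :=
    calc N (t • f) = ENNReal.ofReal t * N f := by rw [hN, abs_of_pos ht]
      _ ≤ ENNReal.ofReal t * ENNReal.ofReal (B * ‖f‖) := by gcongr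
      _ = 1 := by
        rw [← ENNReal.ofReal_mul ht.le, ht_def, inv_mul_cancel₀ (by positivity),
          ENNReal.ofReal_one]
  calc ENNReal.ofReal (‖f‖ / B) = ENNReal.ofReal ⟪f, t • f⟫ := by
        rw [real_inner_smul_right, real_inner_self_eq_norm_sq, ht_def]
        congr 1
        field_simp
    _ ≤ dualNorm N f :=
        le_iSup (fun g : {g : H // N g ≤ 1} => ENNReal.ofReal ⟪f, (g : H)⟫) ⟨t • f, hNt⟩

theorem dualNorm_sub_le_of_jackson {P : H → H} (hPorth : ∀ f g : H, ⟪f - P f, P g⟫ = 0)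
    {J : ℝ} (hJack : ∀ g : H, ENNReal.ofReal ‖g - P g‖ ≤ ENNReal.ofReal J * N g) (f : H) :
    dualNorm N (f - P f) ≤ ENNReal.ofReal (J * ‖f - P f‖) := by
  refine iSup_le fun ⟨g, hg⟩ => ?_
  have hinner : ⟪f - P f, g⟫ = ⟪f - P f, g - P g⟫ := by
    rw [inner_sub_right, hPorth, sub_zero]
  calc ENNReal.ofReal ⟪f - P f, g⟫
      ≤ ENNReal.ofReal (‖f - P f‖ * ‖g - P g‖) :=
        ENNReal.ofReal_le_ofReal (hinner ▸ real_inner_le_norm _ _)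
    _ = ENNReal.ofReal ‖f - P f‖ * ENNReal.ofReal ‖g - P g‖ :=
        ENNReal.ofReal_mul (norm_nonneg _)
    _ ≤ ENNReal.ofReal ‖f - P f‖ * (ENNReal.ofReal J * 1) := by
        gcongr
        exact (hJack g).trans (by gcongr)
    _ = ENNReal.ofReal (J * ‖f - P f‖) := by
        rw [mul_one, ← ENNReal.ofReal_mul (norm_nonneg _), mul_comm]

variable {G : Type*} [NormedAddCommGroup G]

theorem norm_le_of_bernstein_of_dualNorm_le (A : H → G)
    (hN : ∀ (a : ℝ) (f : H), N (a • f) = ENNReal.ofReal |a| * N f) {B c : ℝ}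
    (hB : 0 < B) (hc : 0 < c) {f : H} (hBern : N f ≤ ENNReal.ofReal (B * ‖f‖))
    (hlow : ENNReal.ofReal c * dualNorm N f ≤ ENNReal.ofReal ‖A f‖) :
    ‖f‖ ≤ B / c * ‖A f‖ := by
  have hreal : c * (‖f‖ / B) ≤ ‖A f‖ := by
    refine (ENNReal.ofReal_le_ofReal_iff (norm_nonneg _)).1 ?_
    rw [ENNReal.ofReal_mul hc.le]
    exact (mul_le_mul_right (ofReal_norm_div_le_dualNorm hN hBern) _).trans hlow
  calc ‖f‖ = B / c * (c * (‖f‖ / B)) := by field_simp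
    _ ≤ B / c * ‖A f‖ := by gcongr

theorem norm_apply_sub_le_of_jackson (A : H → G) {P : H → H}
    (hPorth : ∀ f g : H, ⟪f - P f, P g⟫ = 0) {J C : ℝ} (hJ : 0 ≤ J) (hC : 0 ≤ C)
    (hJack : ∀ g : H, ENNReal.ofReal ‖g - P g‖ ≤ ENNReal.ofReal J * N g)
    (hup : ∀ f : H, ENNReal.ofReal ‖A f‖ ≤ ENNReal.ofReal C * dualNorm N f) (f : H) :
    ‖A (f - P f)‖ ≤ C * J * ‖f - P f‖ := by
  refine (ENNReal.ofReal_le_ofReal_iff (by positivity)).1 ?_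
  calc ENNReal.ofReal ‖A (f - P f)‖ ≤ ENNReal.ofReal C * dualNorm N (f - P f) := hup _
    _ ≤ ENNReal.ofReal C * ENNReal.ofReal (J * ‖f - P f‖) := by
        gcongr
        exact dualNorm_sub_le_of_jackson hPorth hJack f
    _ = ENNReal.ofReal (C * J * ‖f - P f‖) := by rw [← ENNReal.ofReal_mul hC, mul_assoc]

end DualNorm

section Galerkin

variable {H G : Type*} [NormedAddCommGroup H] [InnerProductSpace ℝ H]
  [NormedAddCommGroup G] [InnerProductSpace ℝ G]
  {V : Submodule ℝ H} {A : H →L[ℝ] G} {R : G → H}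

theorem norm_apply_galerkin_le (hRmem : ∀ g, R g ∈ V)
    (hGal : ∀ g : G, ∀ v ∈ V, ⟪g - A (R g), A v⟫ = 0) (g : G) : ‖A (R g)‖ ≤ ‖g‖ := by
  simpa using norm_right_le_norm_add_of_inner_eq_zero (hGal g _ (hRmem g))

theorem norm_galerkin_sub_le (hRmem : ∀ g, R g ∈ V)
    (hGal : ∀ g : G, ∀ v ∈ V, ⟪g - A (R g), A v⟫ = 0) {S : ℝ} (hS : 0 ≤ S)
    (hstab : ∀ v ∈ V, ‖v‖ ≤ S * ‖A v‖) (f : H) {p : H} (hp : p ∈ V) :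
    ‖R (A f) - f‖ ≤ ‖f - p‖ + S * ‖A (f - p)‖ := by
  have hmem : R (A f) - p ∈ V := V.sub_mem (hRmem _) hp
  have hAu : ‖A (R (A f) - p)‖ ≤ ‖A (f - p)‖ := by
    simpa only [map_sub, sub_add_sub_cancel] using
      norm_right_le_norm_add_of_inner_eq_zero (hGal (A f) _ hmem)
  calc ‖R (A f) - f‖ = ‖(R (A f) - p) - (f - p)‖ := by rw [sub_sub_sub_cancel_right]
    _ ≤ ‖R (A f) - p‖ + ‖f - p‖ := norm_sub_le _ _
    _ ≤ S * ‖A (f - p)‖ + ‖f - p‖ := by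
        gcongr
        exact (hstab _ hmem).trans (by gcongr)
    _ = ‖f - p‖ + S * ‖A (f - p)‖ := add_comm _ _

end Galerkin

theorem galerkin_inversion_estimates_general
    {H G : Type*} [NormedAddCommGroup H] [InnerProductSpace ℝ H]
    [NormedAddCommGroup G] [InnerProductSpace ℝ G]
    (Nγ : H → ℝ≥0∞) (hNγ : IsExtSeminorm Nγ)
    (V : Submodule ℝ H)
    (P : H → H) (hPmem : ∀ f, P f ∈ V)
    (hPorth : ∀ f : H, ∀ v ∈ V, ⟪f - P f, v⟫ = 0)
    (δ : ℝ) (hδ : 0 < δ) (C₀ : ℝ) (hC₀ : 1 ≤ C₀)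
    (hJack : ∀ f : H, ENNReal.ofReal ‖f - P f‖ ≤ ENNReal.ofReal (C₀ * δ) * Nγ f)
    (hBern : ∀ g ∈ V, Nγ g ≤ ENNReal.ofReal (C₀ * ‖g‖ / δ))
    (A : H →L[ℝ] G)
    (c C : ℝ) (hc : 0 < c) (hcC : c ≤ C)
    (hAlow : ∀ f : H, ENNReal.ofReal c * dualNorm Nγ f ≤ ENNReal.ofReal ‖A f‖)
    (hAup : ∀ f : H, ENNReal.ofReal ‖A f‖ ≤ ENNReal.ofReal C * dualNorm Nγ f)
    -- Q : orthogonal projection of G onto A(V); R = (A|_V)⁻¹ ∘ Q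
    (Q : G → G)
    (hQorth : ∀ g : G, ∀ v ∈ V, ⟪g - Q g, A v⟫ = 0)
    (R : G → H) (hRmem : ∀ g : G, R g ∈ V) (hRQ : ∀ g : G, A (R g) = Q g) :
    ∃ K : ℝ, 0 < K ∧
      (∀ g : G, ‖R g‖ ≤ K * ‖g‖ / δ) ∧
      (∀ f : H, ‖R (A f)‖ ≤ K * ‖f‖) ∧
      (∀ (Ns : H → ℝ≥0∞) (δs : ℝ), 0 ≤ δs →
        (∀ f : H, ENNReal.ofReal ‖f - P f‖ ≤ ENNReal.ofReal δs * Ns f) →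
        ∀ f : H, ENNReal.ofReal ‖R (A f) - f‖ ≤ ENNReal.ofReal (K * δs) * Ns f) := by
  have hC₀pos : 0 < C₀ := by linarith
  have hC : 0 ≤ C := by linarith
  have hPorth' : ∀ f g : H, ⟪f - P f, P g⟫ = 0 := fun f g => hPorth f (P g) (hPmem g)
  have hGal : ∀ g : G, ∀ v ∈ V, ⟪g - A (R g), A v⟫ = 0 := fun g => hRQ g ▸ hQorth g
  have hstab : ∀ v ∈ V, ‖v‖ ≤ C₀ / δ / c * ‖A v‖ := fun v hv =>
    norm_le_of_bernstein_of_dualNorm_le A hNγ.2.1 (by positivity) hc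
      (by rw [div_mul_eq_mul_div]; exact hBern v hv) (hAlow v)
  set L := 1 + C * C₀ ^ 2 / c with hL_def
  have hquasi : ∀ f, ‖R (A f) - f‖ ≤ L * ‖f - P f‖ := fun f =>
    calc ‖R (A f) - f‖ ≤ ‖f - P f‖ + C₀ / δ / c * ‖A (f - P f)‖ :=
          norm_galerkin_sub_le hRmem hGal (by positivity) hstab f (hPmem f)
      _ ≤ ‖f - P f‖ + C₀ / δ / c * (C * (C₀ * δ) * ‖f - P f‖) := by
          gcongr
          exact norm_apply_sub_le_of_jackson A hPorth' (by positivity) hC hJack hAup f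
      _ = L * ‖f - P f‖ := by rw [hL_def]; field_simp
  have hL : 0 ≤ L := by positivity
  refine ⟨C₀ / c + 1 + L, by positivity, fun g => ?_, fun f => ?_, fun Ns δs hδs hNs f => ?_⟩
  · calc ‖R g‖ ≤ C₀ / δ / c * ‖A (R g)‖ := hstab _ (hRmem g)
      _ ≤ C₀ / δ / c * ‖g‖ := by gcongr; exact norm_apply_galerkin_le hRmem hGal g
      _ = C₀ / c * ‖g‖ / δ := by ring
      _ ≤ (C₀ / c + 1 + L) * ‖g‖ / δ := by gcongr; linarith
  · have hres : ‖f - P f‖ ≤ ‖f‖ := by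
      simpa using norm_left_le_norm_add_of_inner_eq_zero (hPorth' f f)
    calc ‖R (A f)‖ ≤ ‖f‖ + ‖R (A f) - f‖ := norm_le_norm_add_norm_sub' _ _
      _ ≤ ‖f‖ + L * ‖f‖ := by gcongr; exact (hquasi f).trans (by gcongr)
      _ ≤ (C₀ / c + 1 + L) * ‖f‖ := by nlinarith [norm_nonneg f, (by positivity : 0 ≤ C₀ / c)]
  · calc ENNReal.ofReal ‖R (A f) - f‖ ≤ ENNReal.ofReal L * ENNReal.ofReal ‖f - P f‖ := by
          rw [← ENNReal.ofReal_mul hL]; exact ENNReal.ofReal_le_ofReal (hquasi f)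
      _ ≤ ENNReal.ofReal L * (ENNReal.ofReal δs * Ns f) := by gcongr; exact hNs f
      _ ≤ ENNReal.ofReal ((C₀ / c + 1 + L) * δs) * Ns f := by
          rw [← mul_assoc, ← ENNReal.ofReal_mul hL]
          gcongr
          linarith [(by positivity : 0 ≤ C₀ / c)]

/-- **Estimates for the Galerkin inversion** (Lemma A.2): under Jackson and Bernstein
inequalities for `N_γ` on the finite-dimensional space `V` and the smoothing property
`‖Af‖ ≍ ‖f‖_{−γ}`, the Galerkin inversion `R = (A|_V)⁻¹ Q` satisfies
(i) `‖Rg‖₀ ≤ K‖g‖/δ`, (ii) `‖RAf‖₀ ≤ K‖f‖₀`, and (iii) the Galerkin solution `f^{(V)} = RAf`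
inherits any approximation rate of the projection: `‖f^{(V)} − f‖₀ ≤ K δ_s N_s(f)`. -/
theorem galerkin_inversion_estimates
    {H G : Type*} [NormedAddCommGroup H] [InnerProductSpace ℝ H]
    [NormedAddCommGroup G] [InnerProductSpace ℝ G]
    (Nγ : H → ℝ≥0∞) (hNγ : IsExtSeminorm Nγ)
    (V : Submodule ℝ H) [FiniteDimensional ℝ V]
    (P : H → H) (hPmem : ∀ f, P f ∈ V)
    (hPorth : ∀ f : H, ∀ v ∈ V, ⟪f - P f, v⟫ = 0)
    (δ : ℝ) (hδ : 0 < δ) (C₀ : ℝ) (hC₀ : 1 ≤ C₀)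
    (hJack : ∀ f : H, ENNReal.ofReal ‖f - P f‖ ≤ ENNReal.ofReal (C₀ * δ) * Nγ f)
    (hBern : ∀ g ∈ V, Nγ g ≤ ENNReal.ofReal (C₀ * ‖g‖ / δ))
    (A : H →L[ℝ] G) (hAinj : Function.Injective A)
    (c C : ℝ) (hc : 0 < c) (hcC : c ≤ C)
    (hAlow : ∀ f : H, ENNReal.ofReal c * dualNorm Nγ f ≤ ENNReal.ofReal ‖A f‖)
    (hAup : ∀ f : H, ENNReal.ofReal ‖A f‖ ≤ ENNReal.ofReal C * dualNorm Nγ f)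
    -- Q : orthogonal projection of G onto A(V); R = (A|_V)⁻¹ ∘ Q
    (Q : G → G) (hQmem : ∀ g : G, Q g ∈ (⇑A) '' (V : Set H))
    (hQorth : ∀ g : G, ∀ v ∈ V, ⟪g - Q g, A v⟫ = 0)
    (R : G → H) (hRmem : ∀ g : G, R g ∈ V) (hRQ : ∀ g : G, A (R g) = Q g) :
    ∃ K : ℝ, 0 < K ∧
      (∀ g : G, ‖R g‖ ≤ K * ‖g‖ / δ) ∧
      (∀ f : H, ‖R (A f)‖ ≤ K * ‖f‖) ∧
      (∀ (Ns : H → ℝ≥0∞) (δs : ℝ), 0 ≤ δs →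
        (∀ f : H, ENNReal.ofReal ‖f - P f‖ ≤ ENNReal.ofReal δs * Ns f) →
        ∀ f : H, ENNReal.ofReal ‖R (A f) - f‖ ≤ ENNReal.ofReal (K * δs) * Ns f) :=
  galerkin_inversion_estimates_general Nγ hNγ V P hPmem hPorth δ hδ C₀ hC₀ hJack hBern A c C hc hcC
    hAlow hAup Q hQorth R hRmem hRQ

end
end

section
/- Let d > 0, s > 0 and t ≥ 0. In ℓ²(ℕ) consider the ellipsoid E_s := { f ∈ ℓ²(ℕ) : Σ_{i∈ℕ} i^{2s/d} f_i² ≤ 1 } and the metric ρ₋t(f,g) := (Σ_{i∈ℕ} i^{−2t/d} (f_i − g_i)²)^{1/2}. For ε > 0 let N(ε) denote the minimal number of ρ₋t-balls of radius ε (with arbitrary centers) needed to cover E_s. Then there exist constants 0 < c ≤ C and ε₀ > 0 such that for all ε ∈ (0, ε₀): c · ε^{−d/(s+t)} ≤ log N(ε) ≤ C · ε^{−d/(s+t)}. -/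
/-!
Both bounds reduce to the finite-dimensional ellipsoid
`A_m = {y ∈ ℝᵐ : Σ_{i<m} (i+1)^{2α} y_i² ≤ 1}`, `α = (s+t)/d`, through the coordinates
`y_i = (i+1)^{-t/d} f_i`, in which `ρ_{-t}` restricted to the first `m` coordinates becomes the
Euclidean distance.

Upper bound: beyond coordinate `m` every `f ∈ E_s` contributes at most `(m+1)^{-2α}` to
`ρ_{-t}(f, ·)²`, so with `(m+1)^{-α} ≤ ε/2` it suffices to cover `A_m` at scale `ε/2`. A maximal
`ε/2`-separated subset of `A_m` does this, and comparing volumes of disjoint balls with that of an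
enlarged ellipsoid bounds its size by `4^m ((m+1)^m/m!)^α ≤ 4^m e^{α(m+1)}`.

Lower bound: when `m^{-α} ≥ 2ε`, `A_m` contains the Euclidean ball of radius `2ε`, and covering it
by balls of radius `ε` takes at least `2^m` of them. In both cases `m ≍ ε^{-d/(s+t)}`.
-/

open scoped ENNReal

noncomputable section

/-- The Sobolev-type ellipsoid `E_s = {f ∈ ℓ² : Σ_i i^{2s/d} f_i² ≤ 1}` (in the `[0,∞]`-valued
form, with `1`-based weights). -/
def ellipsoid (d s : ℝ) : Set (ℕ → ℝ) :=
  {f | (∑' i : ℕ, ENNReal.ofReal (((i : ℝ) + 1) ^ (2 * s / d) * f i ^ 2)) ≤ 1}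

/-- The negative-order distance `ρ_{−t}(f,g) = (Σ_i i^{−2t/d} (f_i − g_i)²)^{1/2} ∈ [0,∞]`. -/
def negDist (d t : ℝ) (f g : ℕ → ℝ) : ℝ≥0∞ :=
  (∑' i : ℕ, ENNReal.ofReal (((i : ℝ) + 1) ^ (-(2 * t) / d) * (f i - g i) ^ 2)) ^ (1 / 2 : ℝ)

/-- `T` is an `ε`-cover of the ellipsoid `E_s` for the distance `ρ_{−t}`. -/
def IsCover (d s t ε : ℝ) (T : Finset (ℕ → ℝ)) : Prop :=
  ∀ f ∈ ellipsoid d s, ∃ g ∈ T, negDist d t f g ≤ ENNReal.ofReal ε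

open MeasureTheory Finset Module
open scoped NNReal
open Metric hiding IsCover

section AxisEllipsoid

variable {m : ℕ}

lemma EuclideanSpace.dist_sq_eq_sum_sub_sq (y z : EuclideanSpace ℝ (Fin m)) :
    dist y z ^ 2 = ∑ i, (y i - z i) ^ 2 := by
  simp [EuclideanSpace.dist_sq_eq, Real.dist_eq, sq_abs]

def axisEllipsoid (a : Fin m → ℝ) : Set (EuclideanSpace ℝ (Fin m)) :=
  {y | ∑ i, (y i / a i) ^ 2 ≤ 1}

lemma axisEllipsoid_subset_image_closedBall {a : Fin m → ℝ} (ha : ∀ i, a i ≠ 0) :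
    axisEllipsoid a ⊆ Matrix.toEuclideanLin (Matrix.diagonal a) '' closedBall 0 1 := by
  intro y hy
  refine ⟨WithLp.toLp 2 fun i => y i / a i, ?_, ?_⟩
  · rw [mem_closedBall_zero_iff, ← sq_le_one_iff₀ (norm_nonneg _),
      EuclideanSpace.real_norm_sq_eq]
    exact hy
  · ext i
    simp [Matrix.toEuclideanLin, Matrix.mulVec_diagonal, mul_div_cancel₀ _ (ha i)]

lemma volume_axisEllipsoid_le {a : Fin m → ℝ} (ha : ∀ i, 0 < a i) :
    volume (axisEllipsoid a) ≤
      ENNReal.ofReal (∏ i, a i) * volume (closedBall (0 : EuclideanSpace ℝ (Fin m)) 1) := by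
  have hdet : LinearMap.det (Matrix.toEuclideanLin (Matrix.diagonal a)) = ∏ i, a i := by
    rw [← Matrix.det_diagonal]
    exact LinearMap.det_toLin (PiLp.basisFun 2 ℝ (Fin m)) _
  calc volume (axisEllipsoid a)
      ≤ volume (Matrix.toEuclideanLin (Matrix.diagonal a) '' closedBall 0 1) :=
        measure_mono (axisEllipsoid_subset_image_closedBall fun i => (ha i).ne')
    _ = _ := by
        rw [Measure.addHaar_image_linearMap, hdet,
          abs_of_pos (Finset.prod_pos fun i _ => ha i)]

lemma closedBall_subset_axisEllipsoid {a : Fin m → ℝ} {R : ℝ} (hR : 0 < R)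
    (hRa : ∀ i, R ≤ a i) : closedBall 0 R ⊆ axisEllipsoid a := by
  intro y hy
  rw [mem_closedBall_zero_iff] at hy
  have hsum : ∑ i, (y i) ^ 2 ≤ R ^ 2 := by
    rw [← EuclideanSpace.real_norm_sq_eq]
    exact pow_le_pow_left₀ (norm_nonneg _) hy 2
  calc ∑ i, (y i / a i) ^ 2 ≤ ∑ i, (y i / R) ^ 2 := by
        refine Finset.sum_le_sum fun i _ => ?_
        rw [div_pow, div_pow]
        gcongr
        exact hRa i
    _ = (∑ i, (y i) ^ 2) / R ^ 2 := by simp only [div_pow, Finset.sum_div]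
    _ ≤ 1 := div_le_one_of_le₀ hsum (by positivity)

lemma mem_axisEllipsoid_of_dist_le {a : Fin m → ℝ} (ha : ∀ i, 0 < a i) {r : ℝ} (hr : 0 < r)
    {y w : EuclideanSpace ℝ (Fin m)} (hy : y ∈ axisEllipsoid a) (hw : dist w y ≤ r) :
    w ∈ axisEllipsoid fun i => 2 * max (a i) r := by
  have hdist : ∑ i, ((w i - y i) / r) ^ 2 ≤ 1 := by
    simp only [div_pow, ← Finset.sum_div, ← EuclideanSpace.dist_sq_eq_sum_sub_sq]
    exact div_le_one_of_le₀ (pow_le_pow_left₀ dist_nonneg hw 2) (by positivity)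
  have hterm : ∀ i, (w i / (2 * max (a i) r)) ^ 2 ≤
      ((y i / a i) ^ 2 + ((w i - y i) / r) ^ 2) / 2 := by
    intro i
    set b := max (a i) r
    have hai := ha i
    have hab : a i ≤ b := le_max_left _ _
    have hrb : r ≤ b := le_max_right _ _
    have hy' : (y i / b) ^ 2 ≤ (y i / a i) ^ 2 := by rw [div_pow, div_pow]; gcongr
    have hw' : ((w i - y i) / b) ^ 2 ≤ ((w i - y i) / r) ^ 2 := by rw [div_pow, div_pow]; gcongr
    have hsplit : w i / (2 * b) = (y i / b + (w i - y i) / b) / 2 := by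
      field_simp [(hr.trans_le hrb).ne']
      ring
    rw [hsplit]
    nlinarith [sq_nonneg (y i / b - (w i - y i) / b)]
  calc ∑ i, (w i / (2 * max (a i) r)) ^ 2
      ≤ ∑ i, ((y i / a i) ^ 2 + ((w i - y i) / r) ^ 2) / 2 := Finset.sum_le_sum fun i _ => hterm i
    _ = ((∑ i, (y i / a i) ^ 2) + ∑ i, ((w i - y i) / r) ^ 2) / 2 := by
        rw [← Finset.sum_div, Finset.sum_add_distrib]
    _ ≤ 1 := by linarith [hy.out]

lemma card_mul_pow_le_prod_of_isSeparated {a : Fin m → ℝ} (ha : ∀ i, 0 < a i) {r : ℝ≥0}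
    (hr : 0 < r) {S : Finset (EuclideanSpace ℝ (Fin m))} (hSA : ↑S ⊆ axisEllipsoid a)
    (hS : IsSeparated (r : ℝ≥0∞) (S : Set (EuclideanSpace ℝ (Fin m)))) :
    (S.card : ℝ) * ((r : ℝ) / 2) ^ m ≤ ∏ i, 2 * max (a i) ((r : ℝ) / 2) := by
  set ρ : ℝ := (r : ℝ) / 2
  have hρ : 0 < ρ := by positivity
  have hdisj : (S : Set (EuclideanSpace ℝ (Fin m))).PairwiseDisjoint (closedBall · ρ) := by
    intro z hz z' hz' hne
    refine closedBall_disjoint_closedBall ?_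
    have : (r : ℝ≥0∞) < edist z z' := hS hz hz' hne
    rw [edist_nndist, ENNReal.coe_lt_coe, ← NNReal.coe_lt_coe, coe_nndist] at this
    simpa only [ρ, add_halves] using this
  have hsub : (⋃ z ∈ S, closedBall z ρ) ⊆ axisEllipsoid fun i => 2 * max (a i) ρ := by
    simp only [Set.iUnion_subset_iff]
    exact fun z hz w hw => mem_axisEllipsoid_of_dist_le ha hρ (hSA hz) hw
  set V := volume (closedBall (0 : EuclideanSpace ℝ (Fin m)) 1)
  have hvol : ENNReal.ofReal (S.card * ρ ^ m) * V ≤ ENNReal.ofReal (∏ i, 2 * max (a i) ρ) * V :=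
    calc ENNReal.ofReal (S.card * ρ ^ m) * V = ∑ z ∈ S, volume (closedBall z ρ) := by
          simp_rw [Measure.addHaar_closedBall' _ _ hρ.le, finrank_euclideanSpace_fin,
            Finset.sum_const, nsmul_eq_mul, ENNReal.ofReal_mul (Nat.cast_nonneg _),
            ENNReal.ofReal_natCast, mul_assoc, V]
      _ = volume (⋃ z ∈ S, closedBall z ρ) :=
          (measure_biUnion_finset hdisj fun _ _ => measurableSet_closedBall).symm
      _ ≤ volume (axisEllipsoid fun i => 2 * max (a i) ρ) := measure_mono hsub
      _ ≤ _ := volume_axisEllipsoid_le fun i => by have := ha i; positivity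
  rwa [ENNReal.mul_le_mul_iff_left (measure_closedBall_pos _ _ one_pos).ne'
      measure_closedBall_lt_top.ne,
    ENNReal.ofReal_le_ofReal_iff (Finset.prod_nonneg fun i _ => by positivity)] at hvol

end AxisEllipsoid

lemma Metric.exists_finset_isCover_card_le {X : Type*} [PseudoEMetricSpace X] {A : Set X}
    {ε : ℝ≥0} {N : ℕ}
    (h : ∀ S : Finset X, ↑S ⊆ A → IsSeparated (ε : ℝ≥0∞) (S : Set X) → S.card ≤ N) :
    ∃ T : Finset X, Metric.IsCover ε A T ∧ T.card ≤ N := by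
  have hpack : packingNumber ε A ≤ N := by
    refine iSup₂_le fun C hCA => iSup_le fun hC => ?_
    by_contra! hlt
    obtain ⟨D, hDC, hD⟩ := Set.exists_subset_encard_eq (Order.add_one_le_of_lt hlt)
    have hDfin : D.Finite := Set.finite_of_encard_eq_coe hD
    have hcard := h hDfin.toFinset (by simpa using hDC.trans hCA) (by simpa using hC.subset hDC)
    rw [hDfin.encard_eq_coe_toFinset_card] at hD
    norm_cast at hD
    omega
  have htop : packingNumber ε A ≠ ⊤ := ne_top_of_le_ne_top (by simp) hpack
  have hfin : (maximalSeparatedSet ε A).Finite :=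
    Set.finite_of_encard_le_coe ((encard_maximalSeparatedSet htop).trans_le hpack)
  refine ⟨hfin.toFinset, by simpa using isCover_maximalSeparatedSet htop, ?_⟩
  have := (encard_maximalSeparatedSet htop).trans_le hpack
  rwa [hfin.encard_eq_coe_toFinset_card, Nat.cast_le] at this

lemma pow_le_card_mul_pow_of_closedBall_subset {E ι : Type*} [NormedAddCommGroup E]
    [NormedSpace ℝ E] [MeasurableSpace E] [BorelSpace E] [FiniteDimensional ℝ E]
    {x : E} {R ρ : ℝ} (hR : 0 ≤ R) (hρ : 0 ≤ ρ) {T : Finset ι} {c : ι → E}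
    (hcover : closedBall x R ⊆ ⋃ i ∈ T, closedBall (c i) ρ) :
    R ^ finrank ℝ E ≤ T.card * ρ ^ finrank ℝ E := by
  let μ : Measure E := Measure.addHaar
  have hvol : ENNReal.ofReal (R ^ finrank ℝ E) * μ (closedBall 0 1) ≤
      ENNReal.ofReal (T.card * ρ ^ finrank ℝ E) * μ (closedBall 0 1) :=
    calc ENNReal.ofReal (R ^ finrank ℝ E) * μ (closedBall 0 1) = μ (closedBall x R) :=
          (Measure.addHaar_closedBall' μ x hR).symm
      _ ≤ ∑ i ∈ T, μ (closedBall (c i) ρ) :=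
          (measure_mono hcover).trans (measure_biUnion_finset_le _ _)
      _ = _ := by
          simp_rw [Measure.addHaar_closedBall' μ _ hρ, Finset.sum_const, nsmul_eq_mul,
            ENNReal.ofReal_mul (Nat.cast_nonneg _), ENNReal.ofReal_natCast, mul_assoc]
  rwa [ENNReal.mul_le_mul_iff_left (measure_closedBall_pos _ _ one_pos).ne'
      measure_closedBall_lt_top.ne, ENNReal.ofReal_le_ofReal_iff (by positivity)] at hvol

section WeightedSequences

def weightedSqSum (e : ℝ) (f : ℕ → ℝ) : ℝ≥0∞ :=
  ∑' i : ℕ, ENNReal.ofReal (((i : ℝ) + 1) ^ e * f i ^ 2)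

lemma ofReal_sum_range_le_weightedSqSum (e : ℝ) (f : ℕ → ℝ) (m : ℕ) :
    ENNReal.ofReal (∑ i ∈ range m, ((i : ℝ) + 1) ^ e * f i ^ 2) ≤ weightedSqSum e f := by
  rw [ENNReal.ofReal_sum_of_nonneg fun i _ => by positivity]
  exact ENNReal.sum_le_tsum _

lemma weightedSqSum_eq_sum_range {e : ℝ} {f : ℕ → ℝ} {m : ℕ} (hf : ∀ i, m ≤ i → f i = 0) :
    weightedSqSum e f = ENNReal.ofReal (∑ i ∈ range m, ((i : ℝ) + 1) ^ e * f i ^ 2) := by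
  rw [ENNReal.ofReal_sum_of_nonneg fun i _ => by positivity, weightedSqSum]
  refine tsum_eq_sum fun i hi => ?_
  rw [hf i (by simpa using hi)]
  simp

lemma weightedSqSum_sub_le {e e' : ℝ} (he : e' ≤ e) {f g : ℕ → ℝ} {m : ℕ}
    (hg : ∀ i, m ≤ i → g i = 0) :
    weightedSqSum e' (f - g) ≤
      ENNReal.ofReal (∑ i ∈ range m, ((i : ℝ) + 1) ^ e' * (f i - g i) ^ 2) +
        ENNReal.ofReal (((m : ℝ) + 1) ^ (e' - e)) * weightedSqSum e f := by
  let head : ℕ → ℝ := fun i => if i < m then f i - g i else 0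
  have hterm : ∀ i : ℕ, ENNReal.ofReal (((i : ℝ) + 1) ^ e' * (f - g) i ^ 2) ≤
      ENNReal.ofReal (((i : ℝ) + 1) ^ e' * head i ^ 2) +
        ENNReal.ofReal (((m : ℝ) + 1) ^ (e' - e)) *
          ENNReal.ofReal (((i : ℝ) + 1) ^ e * f i ^ 2) := by
    intro i
    by_cases hi : i < m
    · simp [head, hi]
    · have hmi : (m : ℝ) + 1 ≤ (i : ℝ) + 1 := by norm_cast; omega
      have hrpow : ((i : ℝ) + 1) ^ e' = ((i : ℝ) + 1) ^ (e' - e) * ((i : ℝ) + 1) ^ e := by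
        rw [← Real.rpow_add (by positivity), sub_add_cancel]
      rw [← ENNReal.ofReal_mul (by positivity)]
      refine le_add_left (ENNReal.ofReal_le_ofReal ?_)
      rw [Pi.sub_apply, hg i (not_lt.mp hi), sub_zero, hrpow, mul_assoc]
      gcongr ?_ * _
      exact Real.rpow_le_rpow_of_nonpos (by positivity) hmi (sub_nonpos.mpr he)
  have hhead : weightedSqSum e' head =
      ENNReal.ofReal (∑ i ∈ range m, ((i : ℝ) + 1) ^ e' * (f i - g i) ^ 2) := by
    rw [weightedSqSum_eq_sum_range (m := m) fun i hi => if_neg (not_lt.mpr hi)]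
    congr 1
    exact Finset.sum_congr rfl fun i hi => by simp [Finset.mem_range.mp hi]
  calc weightedSqSum e' (f - g) ≤ ∑' i : ℕ, (ENNReal.ofReal (((i : ℝ) + 1) ^ e' * head i ^ 2) +
        ENNReal.ofReal (((m : ℝ) + 1) ^ (e' - e)) * ENNReal.ofReal (((i : ℝ) + 1) ^ e * f i ^ 2)) :=
        ENNReal.tsum_le_tsum hterm
    _ = _ := by rw [ENNReal.tsum_add, ENNReal.tsum_mul_left, ← hhead, weightedSqSum, weightedSqSum]

lemma negDist_eq (d t : ℝ) (f g : ℕ → ℝ) :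
    negDist d t f g = weightedSqSum (-(2 * t) / d) (f - g) ^ (1 / 2 : ℝ) := rfl

lemma negDist_le_ofReal_iff {d t ε : ℝ} (hε : 0 ≤ ε) {f g : ℕ → ℝ} :
    negDist d t f g ≤ ENNReal.ofReal ε ↔
      weightedSqSum (-(2 * t) / d) (f - g) ≤ ENNReal.ofReal (ε ^ 2) := by
  rw [negDist_eq, one_div, ENNReal.rpow_inv_le_iff two_pos, ENNReal.ofReal_pow hε]
  norm_cast

lemma mem_ellipsoid_iff {d s : ℝ} {f : ℕ → ℝ} :
    f ∈ ellipsoid d s ↔ weightedSqSum (2 * s / d) f ≤ 1 :=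
  Iff.rfl

end WeightedSequences

section Truncation

variable {m : ℕ}

def weightedTrunc (m : ℕ) (b : ℝ) (f : ℕ → ℝ) : EuclideanSpace ℝ (Fin m) :=
  WithLp.toLp 2 fun i => ((i : ℝ) + 1) ^ b * f i

def weightedExtend (b : ℝ) (y : EuclideanSpace ℝ (Fin m)) : ℕ → ℝ :=
  fun i => if h : i < m then ((i : ℝ) + 1) ^ (-b) * y ⟨i, h⟩ else 0

def powerAxes (m : ℕ) (α : ℝ) : Fin m → ℝ :=
  fun i => ((i : ℝ) + 1) ^ (-α)

lemma powerAxes_pos {α : ℝ} (i : Fin m) : 0 < powerAxes m α i := by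
  unfold powerAxes
  positivity

lemma weightedExtend_of_le (b : ℝ) (y : EuclideanSpace ℝ (Fin m)) {i : ℕ} (hi : m ≤ i) :
    weightedExtend b y i = 0 :=
  dif_neg (not_lt.mpr hi)

lemma weightedTrunc_weightedExtend (b : ℝ) (y : EuclideanSpace ℝ (Fin m)) :
    weightedTrunc m b (weightedExtend b y) = y := by
  ext i
  have hi : (0 : ℝ) < (i : ℕ) + 1 := by positivity
  simp [weightedTrunc, weightedExtend, ← mul_assoc, ← Real.rpow_add hi]

lemma dist_weightedTrunc_sq (b : ℝ) (f g : ℕ → ℝ) :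
    dist (weightedTrunc m b f) (weightedTrunc m b g) ^ 2 =
      ∑ i ∈ range m, ((i : ℝ) + 1) ^ (2 * b) * (f i - g i) ^ 2 := by
  rw [EuclideanSpace.dist_sq_eq_sum_sub_sq, ← Fin.sum_univ_eq_sum_range]
  refine Finset.sum_congr rfl fun i _ => ?_
  have hi : (0 : ℝ) ≤ (i : ℕ) + 1 := by positivity
  simp only [weightedTrunc, ← mul_sub, mul_pow]
  rw [← Real.rpow_natCast, ← Real.rpow_mul hi]
  norm_num [mul_comm]

lemma weightedTrunc_mem_axisEllipsoid_powerAxes_iff (b α : ℝ) (f : ℕ → ℝ) :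
    weightedTrunc m b f ∈ axisEllipsoid (powerAxes m α) ↔
      ∑ i ∈ range m, ((i : ℝ) + 1) ^ (2 * (b + α)) * f i ^ 2 ≤ 1 := by
  rw [axisEllipsoid, Set.mem_ofPred_eq, ← Fin.sum_univ_eq_sum_range]
  suffices h : ∀ i : Fin m, (weightedTrunc m b f i / powerAxes m α i) ^ 2 =
      ((i : ℝ) + 1) ^ (2 * (b + α)) * f i ^ 2 by simp_rw [h]
  intro i
  have hi : (0 : ℝ) < (i : ℕ) + 1 := by positivity
  simp only [weightedTrunc, powerAxes, div_eq_mul_inv, ← Real.rpow_neg hi.le, neg_neg]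
  rw [mul_right_comm, ← Real.rpow_add hi, mul_pow, ← Real.rpow_natCast, ← Real.rpow_mul hi.le]
  norm_num [mul_comm]

end Truncation

section Bridge

variable {d s t : ℝ} {m : ℕ}

lemma weightedTrunc_mem_axisEllipsoid {f : ℕ → ℝ} (hf : f ∈ ellipsoid d s) :
    weightedTrunc m (-(t / d)) f ∈ axisEllipsoid (powerAxes m ((s + t) / d)) := by
  rw [weightedTrunc_mem_axisEllipsoid_powerAxes_iff,
    show 2 * (-(t / d) + (s + t) / d) = 2 * s / d by ring]
  exact ENNReal.ofReal_le_one.mp ((ofReal_sum_range_le_weightedSqSum _ f m).trans hf)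

lemma weightedExtend_mem_ellipsoid {y : EuclideanSpace ℝ (Fin m)}
    (hy : y ∈ axisEllipsoid (powerAxes m ((s + t) / d))) :
    weightedExtend (-(t / d)) y ∈ ellipsoid d s := by
  rw [← weightedTrunc_weightedExtend (-(t / d)) y, weightedTrunc_mem_axisEllipsoid_powerAxes_iff,
    show 2 * (-(t / d) + (s + t) / d) = 2 * s / d by ring] at hy
  rw [mem_ellipsoid_iff, weightedSqSum_eq_sum_range fun i => weightedExtend_of_le _ y]
  exact ENNReal.ofReal_le_one.mpr hy

lemma dist_weightedTrunc_le_of_negDist_le {ε : ℝ} (hε : 0 ≤ ε) {f g : ℕ → ℝ}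
    (h : negDist d t f g ≤ ENNReal.ofReal ε) :
    dist (weightedTrunc m (-(t / d)) f) (weightedTrunc m (-(t / d)) g) ≤ ε := by
  rw [negDist_le_ofReal_iff hε] at h
  have hsum := (ofReal_sum_range_le_weightedSqSum _ (f - g) m).trans h
  rw [ENNReal.ofReal_le_ofReal_iff (sq_nonneg ε)] at hsum
  rw [← pow_le_pow_iff_left₀ dist_nonneg hε two_ne_zero, dist_weightedTrunc_sq,
    show 2 * -(t / d) = -(2 * t) / d by ring]
  exact hsum

lemma negDist_weightedExtend_le (hd : 0 < d) (hst : 0 ≤ s + t) {f : ℕ → ℝ}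
    (hf : f ∈ ellipsoid d s) {y : EuclideanSpace ℝ (Fin m)} {δ : ℝ} (hδ : 0 ≤ δ)
    (hy : dist (weightedTrunc m (-(t / d)) f) y ≤ δ) (hm : ((m : ℝ) + 1) ^ (-((s + t) / d)) ≤ δ) :
    negDist d t f (weightedExtend (-(t / d)) y) ≤ ENNReal.ofReal (2 * δ) := by
  rw [negDist_le_ofReal_iff (by positivity)]
  have he : -(2 * t) / d ≤ 2 * s / d := div_le_div_of_nonneg_right (by linarith) hd.le
  have hhead :
      ∑ i ∈ range m, ((i : ℝ) + 1) ^ (-(2 * t) / d) * (f i - weightedExtend (-(t / d)) y i) ^ 2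
      = dist (weightedTrunc m (-(t / d)) f) y ^ 2 := by
    rw [← weightedTrunc_weightedExtend (-(t / d)) y, dist_weightedTrunc_sq,
      weightedTrunc_weightedExtend, show 2 * -(t / d) = -(2 * t) / d by ring]
  have htail :
      ((m : ℝ) + 1) ^ (-(2 * t) / d - 2 * s / d) = (((m : ℝ) + 1) ^ (-((s + t) / d))) ^ 2 := by
    rw [← Real.rpow_natCast, ← Real.rpow_mul (by positivity)]
    congr 1
    push_cast
    ring
  calc weightedSqSum (-(2 * t) / d) (f - weightedExtend (-(t / d)) y)
      ≤ ENNReal.ofReal (δ ^ 2) + ENNReal.ofReal (δ ^ 2) * 1 := by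
        refine (weightedSqSum_sub_le he fun i => weightedExtend_of_le _ y).trans ?_
        rw [hhead, htail]
        gcongr
        exact hf
    _ ≤ ENNReal.ofReal ((2 * δ) ^ 2) := by
        rw [mul_one, ← ENNReal.ofReal_add (by positivity) (by positivity)]
        exact ENNReal.ofReal_le_ofReal (by nlinarith)

end Bridge

lemma prod_two_mul_max_powerAxes_le {m : ℕ} {α ρ : ℝ} (hα : 0 ≤ α) (hρ : 0 < ρ)
    (hm : ((m : ℝ) + 1) ^ (-α) ≤ 2 * ρ) :
    ∏ i, 2 * max (powerAxes m α i) ρ ≤ (4 * ρ) ^ m * Real.exp (α * (m + 1)) := by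
  set ratio : Fin m → ℝ := fun i => ((m : ℝ) + 1) / ((i : ℝ) + 1)
  have hterm : ∀ i, 2 * max (powerAxes m α i) ρ ≤ 4 * ρ * ratio i ^ α := by
    intro i
    have hi : (0 : ℝ) < (i : ℕ) + 1 := by positivity
    have hratio : 1 ≤ ratio i ^ α := by
      refine Real.one_le_rpow ((one_le_div hi).mpr ?_) hα
      exact_mod_cast Nat.succ_le_succ i.isLt.le
    have ha : powerAxes m α i = ((m : ℝ) + 1) ^ (-α) * ratio i ^ α := by
      rw [Real.div_rpow (by positivity) hi.le, Real.rpow_neg (by positivity), powerAxes,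
        Real.rpow_neg hi.le]
      field_simp
    rw [ha]
    have hmax : max (((m : ℝ) + 1) ^ (-α) * ratio i ^ α) ρ ≤ 2 * ρ * ratio i ^ α :=
      max_le (mul_le_mul_of_nonneg_right hm (by positivity)) (by nlinarith)
    linarith
  have hfact : ∏ i, ratio i ^ α = (((m : ℝ) + 1) ^ m / m.factorial) ^ α := by
    rw [Real.finsetProd_rpow _ _ (fun i _ => by positivity), Finset.prod_div_distrib,
      Finset.prod_const, Finset.card_univ, Fintype.card_fin,
      Fin.prod_univ_eq_prod_range (fun i => (i : ℝ) + 1)]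
    congr 2
    exact_mod_cast Finset.prod_range_add_one_eq_factorial m
  calc ∏ i, 2 * max (powerAxes m α i) ρ ≤ ∏ i, 4 * ρ * ratio i ^ α :=
        Finset.prod_le_prod (fun i _ => by positivity) fun i _ => hterm i
    _ = (4 * ρ) ^ m * (((m : ℝ) + 1) ^ m / m.factorial) ^ α := by
        rw [Finset.prod_mul_distrib, hfact, Finset.prod_const, Finset.card_univ, Fintype.card_fin]
    _ ≤ (4 * ρ) ^ m * Real.exp (α * (m + 1)) := by
        rw [mul_comm α, Real.exp_mul]
        gcongr
        exact Real.pow_div_factorial_le_exp _ (by positivity) m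

section Entropy

variable {d s t : ℝ}

lemma IsCover.card_pos {ε : ℝ} {T : Finset (ℕ → ℝ)} (hT : IsCover d s t ε T) : 0 < T.card := by
  obtain ⟨g, hg, -⟩ := hT 0 (by simp [ellipsoid])
  exact Finset.card_pos.mpr ⟨g, hg⟩

lemma exists_isCover_card_le (hd : 0 < d) (hst : 0 ≤ s + t) {ε : ℝ} (hε : 0 < ε) {m : ℕ}
    (hm : ((m : ℝ) + 1) ^ (-((s + t) / d)) ≤ ε / 2) :
    ∃ T : Finset (ℕ → ℝ), IsCover d s t ε T ∧
      (T.card : ℝ) ≤ 4 ^ m * Real.exp ((s + t) / d * (m + 1)) := by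
  classical
  set α := (s + t) / d
  set r : ℝ≥0 := ⟨ε / 2, by positivity⟩
  have hr : (r : ℝ) = ε / 2 := rfl
  have hr2 : (r : ℝ) / 2 = ε / 4 := by rw [hr]; ring
  have hsep : ∀ S : Finset (EuclideanSpace ℝ (Fin m)), ↑S ⊆ axisEllipsoid (powerAxes m α) →
      IsSeparated (r : ℝ≥0∞) (S : Set (EuclideanSpace ℝ (Fin m))) →
        S.card ≤ ⌊4 ^ m * Real.exp (α * (m + 1))⌋₊ := by
    intro S hSA hS
    refine Nat.le_floor (le_of_mul_le_mul_right ?_ (by positivity : (0 : ℝ) < (ε / 4) ^ m))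
    calc (S.card : ℝ) * (ε / 4) ^ m
        ≤ ∏ i, 2 * max (powerAxes m α i) (ε / 4) := by
          simpa only [hr2] using
            card_mul_pow_le_prod_of_isSeparated powerAxes_pos
              (NNReal.coe_pos.mp (by rw [hr]; positivity)) hSA hS
      _ ≤ (4 * (ε / 4)) ^ m * Real.exp (α * (m + 1)) :=
          prod_two_mul_max_powerAxes_le (by positivity) (by positivity) (by linarith)
      _ = 4 ^ m * Real.exp (α * (m + 1)) * (ε / 4) ^ m := by rw [mul_pow]; ring
  obtain ⟨S, hcover, hcard⟩ := Metric.exists_finset_isCover_card_le hsep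
  refine ⟨S.image (weightedExtend (-(t / d))), fun f hf => ?_, ?_⟩
  · obtain ⟨z, hzS, hz⟩ := hcover (weightedTrunc_mem_axisEllipsoid (t := t) (m := m) hf)
    refine ⟨_, Finset.mem_image_of_mem _ hzS, ?_⟩
    have hdist : dist (weightedTrunc m (-(t / d)) f) z ≤ ε / 2 := by
      replace hz : edist (weightedTrunc m (-(t / d)) f) z ≤ r := hz
      rwa [edist_le_coe, ← NNReal.coe_le_coe, coe_nndist] at hz
    simpa [mul_div_cancel₀] using negDist_weightedExtend_le hd hst hf (by positivity) hdist hm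
  · calc (Finset.card (S.image (weightedExtend (-(t / d)))) : ℝ) ≤ S.card := by
          exact_mod_cast Finset.card_image_le
      _ ≤ _ := (Nat.cast_le.mpr hcard).trans (Nat.floor_le (by positivity))

lemma two_pow_le_card_of_isCover (hd : 0 < d) (hst : 0 ≤ s + t) {ε : ℝ} (hε : 0 < ε) {m : ℕ}
    (hm : 2 * ε ≤ (m : ℝ) ^ (-((s + t) / d))) {T : Finset (ℕ → ℝ)} (hT : IsCover d s t ε T) :
    (2 : ℝ) ^ m ≤ T.card := by
  set R := (m : ℝ) ^ (-((s + t) / d))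
  have hR : 0 < R := by linarith
  have hRaxes : ∀ i, R ≤ powerAxes m ((s + t) / d) i := fun i =>
    Real.rpow_le_rpow_of_nonpos (by positivity) (by exact_mod_cast i.isLt)
      (neg_nonpos.mpr (by positivity))
  have hball : closedBall 0 R ⊆ ⋃ g ∈ T, closedBall (weightedTrunc m (-(t / d)) g) ε := by
    intro y hy
    obtain ⟨g, hgT, hg⟩ :=
      hT _ (weightedExtend_mem_ellipsoid (closedBall_subset_axisEllipsoid hR hRaxes hy))
    have hdist := dist_weightedTrunc_le_of_negDist_le (m := m) hε.le hg
    rw [weightedTrunc_weightedExtend] at hdist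
    exact Set.mem_biUnion hgT (mem_closedBall.mpr hdist)
  have hcover := pow_le_card_mul_pow_of_closedBall_subset hR.le hε.le hball
  rw [finrank_euclideanSpace_fin] at hcover
  refine le_of_mul_le_mul_right ?_ (pow_pos hε m)
  rw [← mul_pow]
  exact (pow_le_pow_left₀ (by positivity) hm m).trans hcover

lemma exists_isCover_log_card_le (hd : 0 < d) (hst : 0 < s + t) {ε : ℝ} (hε : 0 < ε)
    (hε2 : ε ≤ 2) :
    ∃ T : Finset (ℕ → ℝ), IsCover d s t ε T ∧
      Real.log T.card ≤
        (Real.log 4 + 2 * ((s + t) / d)) * 2 ^ (d / (s + t)) * ε ^ (-(d / (s + t))) := by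
  set α := (s + t) / d
  set β := d / (s + t)
  set x := (2 / ε) ^ β with hx_def
  have hαβ : β * α = 1 := by simp only [α, β]; field_simp
  have hx : 1 ≤ x := Real.one_le_rpow ((one_le_div hε).mpr hε2) (by positivity)
  set m := ⌊x⌋₊
  have hm : ((m : ℝ) + 1) ^ (-α) ≤ ε / 2 :=
    calc ((m : ℝ) + 1) ^ (-α) ≤ x ^ (-α) :=
          Real.rpow_le_rpow_of_nonpos (by positivity) (Nat.lt_floor_add_one x).le
            (neg_nonpos.mpr (by positivity))
      _ = ε / 2 := by
          rw [← Real.rpow_mul (by positivity), mul_neg, hαβ, Real.rpow_neg_one, inv_div]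
  obtain ⟨T, hT, hcard⟩ := exists_isCover_card_le hd hst.le hε hm
  refine ⟨T, hT, ?_⟩
  have hmx : (m : ℝ) ≤ x := Nat.floor_le (by positivity)
  calc Real.log T.card ≤ Real.log (4 ^ m * Real.exp (α * (m + 1))) :=
        Real.log_le_log (by exact_mod_cast hT.card_pos) hcard
    _ = m * Real.log 4 + α * (m + 1) := by
        rw [Real.log_mul (by positivity) (by positivity), Real.log_pow, Real.log_exp]
    _ ≤ (Real.log 4 + 2 * α) * x := by
        have hlog4 := Real.log_nonneg (by norm_num : (1 : ℝ) ≤ 4)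
        have hα : 0 ≤ α := by positivity
        nlinarith
    _ = (Real.log 4 + 2 * α) * 2 ^ β * ε ^ (-β) := by
        rw [hx_def, Real.div_rpow (by norm_num) hε.le, Real.rpow_neg hε.le, div_eq_mul_inv,
          mul_assoc]

lemma log_card_ge_of_isCover (hd : 0 < d) (hst : 0 < s + t) {ε : ℝ} (hε : 0 < ε)
    (hε2 : 2 * ε ≤ 1) {T : Finset (ℕ → ℝ)} (hT : IsCover d s t ε T) :
    Real.log 2 / 2 * 2 ^ (-(d / (s + t))) * ε ^ (-(d / (s + t))) ≤ Real.log T.card := by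
  set α := (s + t) / d
  set β := d / (s + t)
  set y := (2 * ε) ^ (-β) with hy_def
  have hαβ : β * α = 1 := by simp only [α, β]; field_simp
  have hy : 1 ≤ y := Real.one_le_rpow_of_pos_of_le_one_of_nonpos (by positivity) hε2
    (neg_nonpos.mpr (by positivity))
  set m := ⌊y⌋₊
  have hm1 : 1 ≤ m := (Nat.one_le_floor_iff y).mpr hy
  have hmy : (m : ℝ) ≤ y := Nat.floor_le (by positivity)
  have hm : 2 * ε ≤ (m : ℝ) ^ (-α) :=
    calc 2 * ε = y ^ (-α) := by
          rw [← Real.rpow_mul (by positivity), neg_mul_neg, hαβ, Real.rpow_one]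
      _ ≤ (m : ℝ) ^ (-α) := Real.rpow_le_rpow_of_nonpos (by exact_mod_cast hm1) hmy
            (neg_nonpos.mpr (by positivity))
  have hcard := two_pow_le_card_of_isCover hd hst.le hε hm hT
  calc Real.log 2 / 2 * 2 ^ (-β) * ε ^ (-β) = Real.log 2 / 2 * y := by
        rw [hy_def, Real.mul_rpow (by norm_num) hε.le, mul_assoc]
    _ ≤ m * Real.log 2 := by
        have hlog2 := Real.log_nonneg (by norm_num : (1 : ℝ) ≤ 2)
        have hym : y < m + 1 := Nat.lt_floor_add_one y
        have hm1' : (1 : ℝ) ≤ m := by exact_mod_cast hm1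
        nlinarith
    _ = Real.log ((2 : ℝ) ^ m) := (Real.log_pow 2 m).symm
    _ ≤ Real.log T.card := Real.log_le_log (by positivity) hcard

end Entropy

/-- **Metric entropy of Sobolev-type ellipsoids** (Lemma B.1):
`log N(ε, E_s, ρ_{−t}) ≍ ε^{−d/(s+t)}` as `ε → 0`. -/
theorem ellipsoid_metric_entropy
    (d s t : ℝ) (hd : 0 < d) (hs : 0 < s) (ht : 0 ≤ t) :
    ∃ c C ε₀ : ℝ, 0 < c ∧ c ≤ C ∧ 0 < ε₀ ∧ ∀ ε : ℝ, 0 < ε → ε < ε₀ →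
      (∃ T : Finset (ℕ → ℝ), IsCover d s t ε T ∧
        Real.log T.card ≤ C * ε ^ (-(d / (s + t)))) ∧
      (∀ T : Finset (ℕ → ℝ), IsCover d s t ε T →
        c * ε ^ (-(d / (s + t))) ≤ Real.log T.card) := by
  have hst : 0 < s + t := by linarith
  set c := Real.log 2 / 2 * 2 ^ (-(d / (s + t)))
  set C := (Real.log 4 + 2 * ((s + t) / d)) * 2 ^ (d / (s + t))
  have hc : 0 < c := by have := Real.log_pos one_lt_two; positivity
  refine ⟨c, max c C, 1 / 2, hc, le_max_left _ _, one_half_pos, fun ε hε hε₀ => ⟨?_, ?_⟩⟩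
  · obtain ⟨T, hT, hlog⟩ := exists_isCover_log_card_le hd hst hε (by linarith)
    exact ⟨T, hT, hlog.trans (by gcongr; exact le_max_right _ _)⟩
  · exact fun T hT => log_card_ge_of_isCover hd hst hε (by linarith) hT

end
end
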